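/- In a weak Hopf algebra H, the images R = p_R(H) and L = p_L(H) are unital subalgebras of H, and they commute elementwise: for all r ∈ R and l ∈ L, rl = lr. -/
import Mathlib


open TensorProduct LinearMap

noncomputable section

/-- A weak Hopf algebra over a commutative ring `k`: a unital associative `k`-algebra `H`
with a multiplicative coassociative weak coproduct `Δ`, a counital weak-multiplicative
weak counit `ε`, and a weak antipode `S`, satisfying the weak Hopf algebra axioms. -/
structure WeakHopfAlgebra (k H : Type*) [CommRing k] [Ring H] [Algebra k H] where
  Δ : H →ₗ[k] H ⊗[k] H
  ε : H →ₗ[k] k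
  S : H →ₗ[k] H
  /-- `Δ` is multiplicative. -/
  Δ_mul : ∀ a b : H, Δ (a * b) = Δ a * Δ b
  /-- `Δ` is coassociative. -/
  coassoc : (TensorProduct.assoc k H H H).toLinearMap ∘ₗ LinearMap.rTensor H Δ ∘ₗ Δ =
    LinearMap.lTensor H Δ ∘ₗ Δ
  /-- `ε` is left counital. -/
  counit_left : (TensorProduct.lid k H).toLinearMap ∘ₗ LinearMap.rTensor H ε ∘ₗ Δ =
    LinearMap.id
  /-- `ε` is right counital. -/
  counit_right : (TensorProduct.rid k H).toLinearMap ∘ₗ LinearMap.lTensor H ε ∘ₗ Δ =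
    LinearMap.id
  /-- Weak unitality: `(Δ(1)⊗1)(1⊗Δ(1)) = (id⊗Δ)Δ(1)`. -/
  weak_unital₁ : (TensorProduct.assoc k H H H) ((Δ 1) ⊗ₜ (1 : H)) *
      ((1 : H) ⊗ₜ (Δ 1)) = LinearMap.lTensor H Δ (Δ 1)
  /-- Weak unitality: `(1⊗Δ(1))(Δ(1)⊗1) = (id⊗Δ)Δ(1)`. -/
  weak_unital₂ : ((1 : H) ⊗ₜ (Δ 1)) *
      (TensorProduct.assoc k H H H) ((Δ 1) ⊗ₜ (1 : H)) = LinearMap.lTensor H Δ (Δ 1)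
  /-- Weak multiplicativity of the counit: `ε(x y₍₁₎)ε(y₍₂₎ z) = ε(xyz)`. -/
  weak_mult₁ : ∀ x y z : H,
    (LinearMap.mul' k k) ((TensorProduct.map ε ε)
      (((x ⊗ₜ (1 : H)) * Δ y) * ((1 : H) ⊗ₜ z))) = ε (x * y * z)
  /-- Weak multiplicativity of the counit: `ε(x y₍₂₎)ε(y₍₁₎ z) = ε(xyz)`. -/
  weak_mult₂ : ∀ x y z : H,
    (LinearMap.mul' k k) ((TensorProduct.map ε ε)
      (((x ⊗ₜ (1 : H)) * (TensorProduct.comm k H H (Δ y))) * ((1 : H) ⊗ₜ z))) =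
      ε (x * y * z)
  /-- Weak antipode axiom: `h₍₁₎ S(h₍₂₎) = ε(1₍₁₎ h) 1₍₂₎`. -/
  antipode_pL : ∀ h : H,
    (LinearMap.mul' k H) ((LinearMap.lTensor H S) (Δ h)) =
      (TensorProduct.lid k H) ((LinearMap.rTensor H ε) ((Δ 1) * (h ⊗ₜ (1 : H))))
  /-- Weak antipode axiom: `S(h₍₁₎) h₍₂₎ = 1₍₁₎ ε(h 1₍₂₎)`. -/
  antipode_pR : ∀ h : H,
    (LinearMap.mul' k H) ((LinearMap.rTensor H S) (Δ h)) =
      (TensorProduct.rid k H) ((LinearMap.lTensor H ε) (((1 : H) ⊗ₜ h) * (Δ 1)))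
  /-- Weak antipode axiom: `S(h₍₁₎) h₍₂₎ S(h₍₃₎) = S(h)`. -/
  antipode_S : ∀ h : H,
    (LinearMap.mul' k H) ((LinearMap.rTensor H S)
      ((LinearMap.lTensor H (LinearMap.mul' k H ∘ₗ LinearMap.lTensor H S))
        ((LinearMap.lTensor H Δ) (Δ h)))) = S h

variable {k H : Type*} [CommRing k] [Ring H] [Algebra k H]

/-- The idempotent `p_L(h) = ε(1₍₁₎ h) 1₍₂₎` as a `k`-linear endomorphism of `H`. -/
def WeakHopfAlgebra.pL (W : WeakHopfAlgebra k H) : H →ₗ[k] H :=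
  (TensorProduct.lid k H).toLinearMap ∘ₗ LinearMap.rTensor H W.ε ∘ₗ
    LinearMap.mulLeft k (W.Δ 1) ∘ₗ Algebra.TensorProduct.includeLeft.toLinearMap

/-- The idempotent `p_R(h) = 1₍₁₎ ε(h 1₍₂₎)` as a `k`-linear endomorphism of `H`. -/
def WeakHopfAlgebra.pR (W : WeakHopfAlgebra k H) : H →ₗ[k] H :=
  (TensorProduct.rid k H).toLinearMap ∘ₗ LinearMap.lTensor H W.ε ∘ₗ
    LinearMap.mulRight k (W.Δ 1) ∘ₗ Algebra.TensorProduct.includeRight.toLinearMap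

set_option maxHeartbeats 1000000
set_option synthInstance.maxHeartbeats 400000

section
namespace WeakHopfAlgebra

variable (W : WeakHopfAlgebra k H)

def epsL (r : H) : H →ₗ[k] k := W.ε ∘ₗ LinearMap.mulLeft k r
def epsR (l : H) : H →ₗ[k] k := W.ε ∘ₗ LinearMap.mulRight k l

@[simp] lemma epsL_apply (r x : H) : W.epsL r x = W.ε (r * x) := rfl
@[simp] lemma epsR_apply (l x : H) : W.epsR l x = W.ε (x * l) := rfl

def rho (r : H) : H ⊗[k] H →ₗ[k] H :=
  (TensorProduct.rid k H).toLinearMap ∘ₗ LinearMap.lTensor H (W.epsL r)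
def lam (l : H) : H ⊗[k] H →ₗ[k] H :=
  (TensorProduct.lid k H).toLinearMap ∘ₗ LinearMap.rTensor H (W.epsR l)

@[simp] lemma rho_tmul (r a b : H) : W.rho r (a ⊗ₜ b) = W.ε (r * b) • a := by
  simp [rho]
@[simp] lemma lam_tmul (l a b : H) : W.lam l (a ⊗ₜ b) = W.ε (a * l) • b := by
  simp [lam]

lemma pR_eq (h : H) : W.pR h = W.rho h (W.Δ 1) := by
  have key : ∀ x : H ⊗[k] H,
      (TensorProduct.rid k H) (LinearMap.lTensor H W.ε (((1:H) ⊗ₜ h) * x)) = W.rho h x := by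
    intro x
    induction x using TensorProduct.induction_on with
    | zero => simp
    | tmul a b => simp [Algebra.TensorProduct.tmul_mul_tmul]
    | add u v hu hv => simp [mul_add, hu, hv]
  simpa [pR] using key (W.Δ 1)

lemma pL_eq (h : H) : W.pL h = W.lam h (W.Δ 1) := by
  have key : ∀ x : H ⊗[k] H,
      (TensorProduct.lid k H) (LinearMap.rTensor H W.ε (x * (h ⊗ₜ (1:H)))) = W.lam h x := by
    intro x
    induction x using TensorProduct.induction_on with
    | zero => simp
    | tmul a b => simp [Algebra.TensorProduct.tmul_mul_tmul]
    | add u v hu hv => simp [add_mul, hu, hv]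
  simpa [pL] using key (W.Δ 1)

lemma counit_right_apply (x : H) :
    (TensorProduct.rid k H) (LinearMap.lTensor H W.ε (W.Δ x)) = x :=
  LinearMap.congr_fun W.counit_right x

lemma counit_left_apply (x : H) :
    (TensorProduct.lid k H) (LinearMap.rTensor H W.ε (W.Δ x)) = x :=
  LinearMap.congr_fun W.counit_left x

lemma pR_of (x : H) (hx : W.Δ x = ((1:H) ⊗ₜ x) * W.Δ 1) : W.pR x = x := by
  have : W.pR x = (TensorProduct.rid k H) (LinearMap.lTensor H W.ε (((1:H) ⊗ₜ x) * W.Δ 1)) := rfl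
  rw [this, ← hx, counit_right_apply]

lemma pL_of (x : H) (hx : W.Δ x = W.Δ 1 * (x ⊗ₜ (1:H))) : W.pL x = x := by
  have : W.pL x = (TensorProduct.lid k H) (LinearMap.rTensor H W.ε (W.Δ 1 * (x ⊗ₜ (1:H)))) := rfl
  rw [this, ← hx, counit_left_apply]

lemma delta_one_idem : W.Δ 1 * W.Δ 1 = W.Δ 1 := by
  rw [← W.Δ_mul]; norm_num

lemma rho_mul (r c : H) (x : H ⊗[k] H) :
    W.rho r (x * (c ⊗ₜ (1:H))) = W.rho r x * c := by
  induction x using TensorProduct.induction_on with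
  | zero => simp
  | tmul a b => simp [Algebra.TensorProduct.tmul_mul_tmul, smul_mul_assoc]
  | add u v hu hv => simp [add_mul, hu, hv]

lemma lam_mul (l c : H) (x : H ⊗[k] H) :
    W.lam l (((1:H) ⊗ₜ c) * x) = c * W.lam l x := by
  induction x using TensorProduct.induction_on with
  | zero => simp
  | tmul a b => simp [Algebra.TensorProduct.tmul_mul_tmul, mul_smul_comm]
  | add u v hu hv => simp [mul_add, hu, hv]

-- A1
lemma lT_rho_assoc (h : H) (z : H ⊗[k] H) (c : H) :
    LinearMap.lTensor H (W.rho h) ((TensorProduct.assoc k H H H) (z ⊗ₜ c)) =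
      W.ε (h * c) • z := by
  induction z using TensorProduct.induction_on with
  | zero => simp
  | tmul a b =>
    simp only [TensorProduct.assoc_tmul, lTensor_tmul, rho_tmul, TensorProduct.tmul_smul]
  | add u v hu hv =>
    simp only [TensorProduct.add_tmul, map_add, hu, hv, smul_add]

-- C2'
lemma lT_rho_assoc_rT (h : H) (x : H ⊗[k] H) :
    LinearMap.lTensor H (W.rho h) ((TensorProduct.assoc k H H H)
      (LinearMap.rTensor H W.Δ x)) = W.Δ (W.rho h x) := by
  induction x using TensorProduct.induction_on with
  | zero => simp
  | tmul a b => rw [rTensor_tmul, lT_rho_assoc]; simp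
  | add u v hu hv => simp [hu, hv]

-- E1
lemma lT_rho_unital (h : H) (x y : H ⊗[k] H) :
    LinearMap.lTensor H (W.rho h) (((1:H) ⊗ₜ y) * (TensorProduct.assoc k H H H) (x ⊗ₜ (1:H))) =
      ((1:H) ⊗ₜ W.rho h y) * x := by
  induction x using TensorProduct.induction_on with
  | zero => simp
  | tmul a b =>
    induction y using TensorProduct.induction_on with
    | zero => simp
    | tmul c d =>
      simp only [TensorProduct.assoc_tmul, Algebra.TensorProduct.tmul_mul_tmul,
        lTensor_tmul, rho_tmul, one_mul, mul_one, smul_mul_assoc, TensorProduct.tmul_smul]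
    | add u v hu hv =>
      simp only [map_add, TensorProduct.tmul_add, add_mul, hu, hv]
  | add u v hu hv =>
    simp only [TensorProduct.add_tmul, map_add, mul_add, hu, hv]

lemma Δ_pR (h : H) : W.Δ (W.pR h) = ((1:H) ⊗ₜ W.pR h) * W.Δ 1 := by
  have e1 : (TensorProduct.assoc k H H H) (LinearMap.rTensor H W.Δ (W.Δ 1)) =
      LinearMap.lTensor H W.Δ (W.Δ 1) := by
    have := LinearMap.congr_fun W.coassoc (1:H)
    simpa using this
  rw [pR_eq, ← lT_rho_assoc_rT, e1, ← W.weak_unital₂, lT_rho_unital]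

-- (id ⊗ ε(·l) ⊗ id) applied after (id ⊗ Δ) : gives Δ ∘ lam
lemma lam3_lT (l : H) (x : H ⊗[k] H) :
    (TensorProduct.lid k (H ⊗[k] H))
      (LinearMap.rTensor (H ⊗[k] H) (W.epsR l) (LinearMap.lTensor H W.Δ x)) =
      W.Δ (W.lam l x) := by
  induction x using TensorProduct.induction_on with
  | zero => simp
  | tmul a b =>
    simp only [lTensor_tmul, rTensor_tmul, TensorProduct.lid_tmul, lam_tmul, map_smul,
      epsR_apply]
  | add u v hu hv => simp only [map_add, hu, hv]

lemma lam3_unital (l : H) (x y : H ⊗[k] H) :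
    (TensorProduct.lid k (H ⊗[k] H))
      (LinearMap.rTensor (H ⊗[k] H) (W.epsR l)
        (((1:H) ⊗ₜ y) * (TensorProduct.assoc k H H H) (x ⊗ₜ (1:H)))) =
      y * (W.lam l x ⊗ₜ (1:H)) := by
  induction x using TensorProduct.induction_on with
  | zero => simp
  | tmul a b =>
    induction y using TensorProduct.induction_on with
    | zero => simp
    | tmul c d =>
      simp only [TensorProduct.assoc_tmul, Algebra.TensorProduct.tmul_mul_tmul,
        rTensor_tmul, TensorProduct.lid_tmul, lam_tmul, epsR_apply, one_mul, mul_one,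
        mul_smul_comm, TensorProduct.smul_tmul', smul_tmul]
    | add u v hu hv =>
      simp only [map_add, TensorProduct.tmul_add, add_mul, hu, hv]
  | add u v hu hv =>
    simp only [TensorProduct.add_tmul, map_add, mul_add, hu, hv]

lemma Δ_pL (h : H) : W.Δ (W.pL h) = W.Δ 1 * (W.pL h ⊗ₜ (1:H)) := by
  rw [pL_eq, ← lam3_lT, ← W.weak_unital₂, lam3_unital]

lemma rho_lam_unital (r l : H) (x y : H ⊗[k] H) :
    W.rho r ((TensorProduct.lid k (H ⊗[k] H))
      (LinearMap.rTensor (H ⊗[k] H) (W.epsR l)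
        ((TensorProduct.assoc k H H H) (x ⊗ₜ (1:H)) * ((1:H) ⊗ₜ y)))) =
      W.lam l x * W.rho r y := by
  induction x using TensorProduct.induction_on with
  | zero => simp
  | tmul a b =>
    induction y using TensorProduct.induction_on with
    | zero => simp
    | tmul c d =>
      simp only [TensorProduct.assoc_tmul, Algebra.TensorProduct.tmul_mul_tmul,
        rTensor_tmul, TensorProduct.lid_tmul, lam_tmul, rho_tmul, epsR_apply, epsL_apply,
        one_mul, mul_one, map_smul, smul_mul_assoc, mul_smul_comm]
      rw [smul_comm]
    | add u v hu hv =>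
      simp only [map_add, TensorProduct.tmul_add, mul_add, hu, hv]
  | add u v hu hv =>
    simp only [TensorProduct.add_tmul, map_add, add_mul, hu, hv]

lemma pR_one : W.pR 1 = 1 := by
  apply pR_of
  rw [← Algebra.TensorProduct.one_def, one_mul]

lemma pL_one : W.pL 1 = 1 := by
  apply pL_of
  rw [← Algebra.TensorProduct.one_def, mul_one]

lemma Δ_mul_R {x y : H} (hx : W.Δ x = ((1:H) ⊗ₜ x) * W.Δ 1)
    (hy : W.Δ y = ((1:H) ⊗ₜ y) * W.Δ 1) :
    W.Δ (x * y) = ((1:H) ⊗ₜ (x * y)) * W.Δ 1 := by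
  have key : W.Δ 1 * (((1:H) ⊗ₜ y) * W.Δ 1) = ((1:H) ⊗ₜ y) * W.Δ 1 := by
    rw [← hy, ← W.Δ_mul, one_mul, hy]
  calc W.Δ (x * y) = (((1:H) ⊗ₜ x) * W.Δ 1) * (((1:H) ⊗ₜ y) * W.Δ 1) := by
        rw [W.Δ_mul, hx, hy]
    _ = ((1:H) ⊗ₜ x) * (W.Δ 1 * (((1:H) ⊗ₜ y) * W.Δ 1)) := by rw [mul_assoc]
    _ = ((1:H) ⊗ₜ x) * (((1:H) ⊗ₜ y) * W.Δ 1) := by rw [key]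
    _ = (((1:H) ⊗ₜ x) * ((1:H) ⊗ₜ y)) * W.Δ 1 := by rw [mul_assoc]
    _ = ((1:H) ⊗ₜ (x * y)) * W.Δ 1 := by
        rw [Algebra.TensorProduct.tmul_mul_tmul, one_mul]

lemma Δ_mul_L {x y : H} (hx : W.Δ x = W.Δ 1 * (x ⊗ₜ (1:H)))
    (hy : W.Δ y = W.Δ 1 * (y ⊗ₜ (1:H))) :
    W.Δ (x * y) = W.Δ 1 * ((x * y) ⊗ₜ (1:H)) := by
  have key : (W.Δ 1 * (x ⊗ₜ (1:H))) * W.Δ 1 = W.Δ 1 * (x ⊗ₜ (1:H)) := by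
    rw [← hx, ← W.Δ_mul, mul_one, hx]
  calc W.Δ (x * y) = (W.Δ 1 * (x ⊗ₜ (1:H))) * (W.Δ 1 * (y ⊗ₜ (1:H))) := by
        rw [W.Δ_mul, hx, hy]
    _ = ((W.Δ 1 * (x ⊗ₜ (1:H))) * W.Δ 1) * (y ⊗ₜ (1:H)) := by rw [← mul_assoc]
    _ = (W.Δ 1 * (x ⊗ₜ (1:H))) * (y ⊗ₜ (1:H)) := by rw [key]
    _ = W.Δ 1 * ((x ⊗ₜ (1:H)) * (y ⊗ₜ (1:H))) := by rw [mul_assoc]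
    _ = W.Δ 1 * ((x * y) ⊗ₜ (1:H)) := by
        rw [Algebra.TensorProduct.tmul_mul_tmul, mul_one]

lemma commute_RL {r l : H} (hr : W.Δ r = ((1:H) ⊗ₜ r) * W.Δ 1)
    (hl : W.Δ l = W.Δ 1 * (l ⊗ₜ (1:H))) : r * l = l * r := by
  have hr' : W.rho r (W.Δ 1) = r := by rw [← pR_eq]; exact W.pR_of r hr
  have hl' : W.lam l (W.Δ 1) = l := by rw [← pL_eq]; exact W.pL_of l hl
  have e1 := W.rho_lam_unital r l (W.Δ 1) (W.Δ 1)
  rw [W.weak_unital₁, lam3_lT, hl', hr', hl, rho_mul, hr'] at e1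
  exact e1

end WeakHopfAlgebra

end

/-- In a weak Hopf algebra, the images `R = p_R(H)` and `L = p_L(H)` are unital
subalgebras of `H`, and they commute elementwise. -/
theorem stmt7 (W : WeakHopfAlgebra k H) :
    ((1 : H) ∈ LinearMap.range W.pR) ∧
    (∀ x y : H, x ∈ LinearMap.range W.pR → y ∈ LinearMap.range W.pR →
      x * y ∈ LinearMap.range W.pR) ∧
    ((1 : H) ∈ LinearMap.range W.pL) ∧
    (∀ x y : H, x ∈ LinearMap.range W.pL → y ∈ LinearMap.range W.pL →
      x * y ∈ LinearMap.range W.pL) ∧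
    (∀ r l : H, r ∈ LinearMap.range W.pR → l ∈ LinearMap.range W.pL → r * l = l * r) := by
  have hR : ∀ x : H, x ∈ LinearMap.range W.pR → W.Δ x = ((1:H) ⊗ₜ x) * W.Δ 1 := by
    rintro x ⟨a, rfl⟩; exact W.Δ_pR a
  have hL : ∀ x : H, x ∈ LinearMap.range W.pL → W.Δ x = W.Δ 1 * (x ⊗ₜ (1:H)) := by
    rintro x ⟨a, rfl⟩; exact W.Δ_pL a
  refine ⟨LinearMap.mem_range.mpr ⟨1, W.pR_one⟩, ?_, LinearMap.mem_range.mpr ⟨1, W.pL_one⟩,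
    ?_, ?_⟩
  · intro x y hx hy
    exact LinearMap.mem_range.mpr ⟨x * y, W.pR_of _ (W.Δ_mul_R (hR x hx) (hR y hy))⟩
  · intro x y hx hy
    exact LinearMap.mem_range.mpr ⟨x * y, W.pL_of _ (W.Δ_mul_L (hL x hx) (hL y hy))⟩
  · intro r l hr hl
    exact W.commute_RL (hR r hr) (hL l hl)

end
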